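/- Let A, B, C be subspaces of E. If A ⊥g∘ B and A ⊥g∘ C, then A ⊥g∘ (B ⊔ C). -/

import Mathlib

/-!
Write `M = X₁ ⊓ X₂`. When the direction of `M` has an orthogonal complement, `X₁ ⊥g∘ X₂` holds
exactly when `X₁ ⊓ X₂` is nonempty and the orthogonal complement of `M` inside `X₁` is orthogonal
to `X₂`: one may always take `Zᵢ` through a point of `M` with direction `Xᵢ ∩ Mᗮ`. For
`M = A ⊓ (B ⊔ C)`, the complement of `M` inside `A` lies in the complements of `A ⊓ B` and
`A ⊓ C`, hence is orthogonal to `B` and to `C`, and it is orthogonal to the segment joining a point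
of `A ⊓ B` to a point of `A ⊓ C`, since both lie in `M`. These three directions span `B ⊔ C`.
-/

/-- `Perp X Y`: every vector in the direction of `X` is orthogonal to every
vector in the direction of `Y`. -/
def Perp {E : Type*} [NormedAddCommGroup E] [InnerProductSpace ℝ E]
    (X Y : AffineSubspace ℝ E) : Prop :=
  ∀ u ∈ X.direction, ∀ v ∈ Y.direction, (inner ℝ u v : ℝ) = 0

/-- `PerpX X Y`: `X ⊥ Y` and `X ∩ Y ≠ ∅`. -/
def PerpX {E : Type*} [NormedAddCommGroup E] [InnerProductSpace ℝ E]
    (X Y : AffineSubspace ℝ E) : Prop :=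
  Perp X Y ∧ ((X : Set E) ∩ (Y : Set E)).Nonempty

/-- `PerpGo X₁ X₂`: the relation `⊥g∘`. -/
def PerpGo {E : Type*} [NormedAddCommGroup E] [InnerProductSpace ℝ E]
    (X₁ X₂ : AffineSubspace ℝ E) : Prop :=
  ∃ q : E, q ∈ X₁ ⊓ X₂ ∧ ∃ Z₁ Z₂ : AffineSubspace ℝ E,
    q ∈ Z₁ ∧ q ∈ Z₂ ∧ PerpX Z₁ (X₁ ⊓ X₂) ∧ PerpX Z₂ (X₁ ⊓ X₂) ∧ PerpX Z₁ Z₂ ∧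
    (X₁ ⊓ X₂) ⊔ Z₁ = X₁ ∧ (X₁ ⊓ X₂) ⊔ Z₂ = X₂

/-- `PerpG X₁ X₂`: the relation `⊥g`. -/
def PerpG {E : Type*} [NormedAddCommGroup E] [InnerProductSpace ℝ E]
    (X₁ X₂ : AffineSubspace ℝ E) : Prop :=
  PerpGo X₁ X₂ ∧ X₁ ⊓ X₂ ≠ X₁ ∧ X₁ ⊓ X₂ ≠ X₂

/-- Dimension of an affine subspace: the dimension of its direction. -/
noncomputable def adim {E : Type*} [NormedAddCommGroup E] [InnerProductSpace ℝ E]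
    (X : AffineSubspace ℝ E) : ℕ :=
  Module.finrank ℝ X.direction

open Submodule AffineSubspace

variable {E : Type*} [NormedAddCommGroup E] [InnerProductSpace ℝ E]

theorem perp_iff_isOrtho {X Y : AffineSubspace ℝ E} : Perp X Y ↔ X.direction ⟂ Y.direction :=
  isOrtho_iff_inner_eq.symm

theorem PerpGo.isOrtho {A X : AffineSubspace ℝ E} (h : PerpGo A X) :
    A.direction ⊓ (A ⊓ X).directionᗮ ⟂ X.direction := by
  obtain ⟨q, hq, Z, Z', hqZ, hqZ', ⟨hZM, -⟩, -, ⟨hZZ', -⟩, hA, hX⟩ := h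
  rw [perp_iff_isOrtho] at hZM hZZ'
  have hdirA := direction_sup_eq_sup_direction hq hqZ
  have hdirX := direction_sup_eq_sup_direction hq hqZ'
  rw [hA] at hdirA
  rw [hX] at hdirX
  -- the complement of `M` inside `A = M ⊔ Z` is `Z`, by the modular law
  have hle : A.direction ⊓ (A ⊓ X).directionᗮ ≤ Z.direction := by
    rw [hdirA, sup_comm, sup_inf_assoc_of_le _ hZM, inf_orthogonal_eq_bot, sup_bot_eq]
  rw [hdirX]
  exact (isOrtho_sup_right.mpr ⟨hZM, hZZ'⟩).mono_left hle

theorem perpX_mk'_inf_orthogonal {M : AffineSubspace ℝ E} {q : E} (hq : q ∈ M)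
    (Y : Submodule ℝ E) : PerpX (mk' q (Y ⊓ M.directionᗮ)) M :=
  ⟨perp_iff_isOrtho.mpr <| by
      rw [direction_mk']
      exact (isOrtho_orthogonal_right _).symm.mono_left inf_le_right,
    q, self_mem_mk' _ _, hq⟩

theorem sup_mk'_inf_orthogonal_eq {M Y : AffineSubspace ℝ E} [M.direction.HasOrthogonalProjection]
    {q : E} (hq : q ∈ M) (hMY : M ≤ Y) : M ⊔ mk' q (Y.direction ⊓ M.directionᗮ) = Y := by
  refine ext_of_direction_eq ?_ ⟨q, le_sup_left (a := M) hq, hMY hq⟩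
  rw [direction_sup_eq_sup_direction hq (self_mem_mk' _ _), direction_mk', inf_comm]
  exact sup_orthogonal_inf_of_hasOrthogonalProjection (direction_le hMY)

theorem perpGo_of_isOrtho {A X : AffineSubspace ℝ E} [(A ⊓ X).direction.HasOrthogonalProjection]
    {q : E} (hq : q ∈ A ⊓ X) (h : A.direction ⊓ (A ⊓ X).directionᗮ ⟂ X.direction) :
    PerpGo A X := by
  refine ⟨q, hq, mk' q (A.direction ⊓ (A ⊓ X).directionᗮ),
    mk' q (X.direction ⊓ (A ⊓ X).directionᗮ), self_mem_mk' _ _, self_mem_mk' _ _,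
    perpX_mk'_inf_orthogonal hq _, perpX_mk'_inf_orthogonal hq _,
    ⟨perp_iff_isOrtho.mpr ?_, q, self_mem_mk' _ _, self_mem_mk' _ _⟩,
    sup_mk'_inf_orthogonal_eq hq inf_le_left, sup_mk'_inf_orthogonal_eq hq inf_le_right⟩
  rw [direction_mk', direction_mk']
  exact h.mono_right inf_le_left

theorem isOrtho_direction_sup {U : Submodule ℝ E} {B C : AffineSubspace ℝ E} {p₁ p₂ : E}
    (hp₁ : p₁ ∈ B) (hp₂ : p₂ ∈ C) (hB : U ⟂ B.direction) (hC : U ⟂ C.direction)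
    (hp : U ⟂ ℝ ∙ (p₂ -ᵥ p₁)) : U ⟂ (B ⊔ C).direction := by
  rw [direction_sup hp₁ hp₂]
  exact isOrtho_sup_right.mpr ⟨isOrtho_sup_right.mpr ⟨hB, hC⟩, hp⟩

variable [FiniteDimensional ℝ E]

theorem stmt16_general (A B C : AffineSubspace ℝ E)
    (h₁ : PerpGo A B) (h₂ : PerpGo A C) :
    PerpGo A (B ⊔ C) := by
  obtain ⟨q, hq, -⟩ := id h₁
  obtain ⟨q', hq', -⟩ := id h₂
  set M := A ⊓ (B ⊔ C)
  have hqM : q ∈ M := inf_le_inf_left A le_sup_left hq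
  have hq'M : q' ∈ M := inf_le_inf_left A le_sup_right hq'
  have hcompl {X : AffineSubspace ℝ E} (hX : X ≤ B ⊔ C) :
      A.direction ⊓ M.directionᗮ ≤ A.direction ⊓ (A ⊓ X).directionᗮ :=
    inf_le_inf_left _ (orthogonal_le (direction_le (inf_le_inf_left A hX)))
  refine perpGo_of_isOrtho hqM (isOrtho_direction_sup hq.2 hq'.2 ?_ ?_ ?_)
  · exact h₁.isOrtho.mono_left (hcompl le_sup_left)
  · exact h₂.isOrtho.mono_left (hcompl le_sup_right)
  · refine (isOrtho_orthogonal_right M.direction).symm.mono inf_le_right ?_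
    exact (span_singleton_le_iff_mem _ _).mpr (vsub_mem_direction hq'M hqM)

theorem stmt16 (A B C : AffineSubspace ℝ E)
    (hA : (A : Set E).Nonempty) (hB : (B : Set E).Nonempty) (hC : (C : Set E).Nonempty)
    (h₁ : PerpGo A B) (h₂ : PerpGo A C) :
    PerpGo A (B ⊔ C) :=
  stmt16_general A B C h₁ h₂
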